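/- arXiv:2404.10654 — 6 statements merged into one kernel-verified Lean document; each statement's English description precedes it below -/
import Mathlib

section
/- Let (X,Y) and (X',Y') be i.i.d. random vectors with bounded joint distribution that is symmetric in the sense that (X,Y) and (-X,-Y) have the same distribution. If X-X' and Y-Y' are independent, then X and Y are independent. -/
open MeasureTheory ProbabilityTheory Finset
open scoped NNReal ENNReal

lemma aux_integrable_of_concentrated {ν : Measure (ℝ×ℝ)} [IsFiniteMeasure ν] {K : Set (ℝ×ℝ)}
    (hK : IsCompact K) (hν : ∀ᵐ p ∂ν, p ∈ K) {f : ℝ×ℝ → ℝ} (hf : Continuous f) :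
    Integrable f ν := by
  obtain ⟨M, hM⟩ := hK.exists_bound_of_continuousOn hf.continuousOn
  exact Integrable.mono' (integrable_const M) hf.aestronglyMeasurable
    (by filter_upwards [hν] with p hp using hM p hp)

lemma aux_mem_span_monomials {f : ℝ×ℝ → ℝ}
    (hf : f ∈ Algebra.adjoin ℝ ({fun p => p.1, fun p => p.2} : Set (ℝ×ℝ → ℝ))) :
    f ∈ Submodule.span ℝ {g : ℝ×ℝ → ℝ | ∃ m n : ℕ, g = fun p => p.1 ^ m * p.2 ^ n} := by
  set M := {g : ℝ×ℝ → ℝ | ∃ m n : ℕ, g = fun p => p.1 ^ m * p.2 ^ n} with hM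
  induction hf using Algebra.adjoin_induction with
  | mem g hg =>
    apply Submodule.subset_span
    rcases hg with hg | hg
    · exact ⟨1, 0, by simp [hg]⟩
    · exact ⟨0, 1, by simp [Set.mem_singleton_iff.mp hg]⟩
  | algebraMap r =>
    have : (algebraMap ℝ (ℝ×ℝ → ℝ)) r = r • (fun p : ℝ×ℝ => p.1 ^ 0 * p.2 ^ 0) := by
      funext p; simp [Algebra.algebraMap_eq_smul_one]
    rw [this]
    exact Submodule.smul_mem _ _ (Submodule.subset_span ⟨0, 0, rfl⟩)
  | add x y hx hy ihx ihy => exact Submodule.add_mem _ ihx ihy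
  | mul x y hx hy ihx ihy =>
    clear hx hy
    induction ihx using Submodule.span_induction with
    | mem g hg =>
      induction ihy using Submodule.span_induction with
      | mem g' hg' =>
        apply Submodule.subset_span
        obtain ⟨m, n, rfl⟩ := hg
        obtain ⟨m', n', rfl⟩ := hg'
        exact ⟨m + m', n + n', by funext p; simp [pow_add]; ring⟩
      | zero => simpa using Submodule.zero_mem _
      | add a b ha hb iha ihb => rw [mul_add]; exact Submodule.add_mem _ iha ihb
      | smul r a ha iha => rw [mul_smul_comm]; exact Submodule.smul_mem _ _ iha
    | zero => simpa using Submodule.zero_mem _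
    | add a b ha hb iha ihb => rw [add_mul]; exact Submodule.add_mem _ iha ihb
    | smul r a ha iha => rw [smul_mul_assoc]; exact Submodule.smul_mem _ _ iha

lemma aux_integral_eq_of_span {ν ν' : Measure (ℝ×ℝ)} [IsProbabilityMeasure ν]
    [IsProbabilityMeasure ν'] {K : Set (ℝ×ℝ)} (hK : IsCompact K)
    (hν : ∀ᵐ p ∂ν, p ∈ K) (hν' : ∀ᵐ p ∂ν', p ∈ K)
    (hmom : ∀ m n : ℕ, ∫ p, p.1 ^ m * p.2 ^ n ∂ν = ∫ p, p.1 ^ m * p.2 ^ n ∂ν')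
    {f : ℝ×ℝ → ℝ}
    (hsp : f ∈ Submodule.span ℝ {g : ℝ×ℝ → ℝ | ∃ m n : ℕ, g = fun p => p.1 ^ m * p.2 ^ n}) :
    Continuous f ∧ ∫ p, f p ∂ν = ∫ p, f p ∂ν' := by
  induction hsp using Submodule.span_induction with
  | mem g hg =>
    obtain ⟨m, n, rfl⟩ := hg
    exact ⟨by fun_prop, hmom m n⟩
  | zero => exact ⟨continuous_const, by simp⟩
  | add a b ha hb iha ihb =>
    refine ⟨iha.1.add ihb.1, ?_⟩
    rw [show ((a + b : ℝ×ℝ→ℝ)) = fun p => a p + b p from rfl]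
    rw [integral_add (aux_integrable_of_concentrated hK hν iha.1)
      (aux_integrable_of_concentrated hK hν ihb.1),
      integral_add (aux_integrable_of_concentrated hK hν' iha.1)
      (aux_integrable_of_concentrated hK hν' ihb.1), iha.2, ihb.2]
  | smul r a ha iha =>
    refine ⟨iha.1.const_smul r, ?_⟩
    rw [show ((r • a : ℝ×ℝ→ℝ)) = fun p => r • a p from rfl]
    rw [integral_smul, integral_smul, iha.2]

lemma aux_integral_eq_of_adjoin {ν ν' : Measure (ℝ×ℝ)} [IsProbabilityMeasure ν]
    [IsProbabilityMeasure ν'] {K : Set (ℝ×ℝ)} (hK : IsCompact K)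
    (hν : ∀ᵐ p ∂ν, p ∈ K) (hν' : ∀ᵐ p ∂ν', p ∈ K)
    (hmom : ∀ m n : ℕ, ∫ p, p.1 ^ m * p.2 ^ n ∂ν = ∫ p, p.1 ^ m * p.2 ^ n ∂ν')
    {f : ℝ×ℝ → ℝ}
    (hf : f ∈ Algebra.adjoin ℝ ({fun p => p.1, fun p => p.2} : Set (ℝ×ℝ → ℝ))) :
    Continuous f ∧ ∫ p, f p ∂ν = ∫ p, f p ∂ν' :=
  aux_integral_eq_of_span hK hν hν' hmom (aux_mem_span_monomials hf)

lemma aux_measure_eq {ν ν' : Measure (ℝ×ℝ)} [IsProbabilityMeasure ν] [IsProbabilityMeasure ν']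
    {K : Set (ℝ×ℝ)} (hK : IsCompact K)
    (hν : ∀ᵐ p ∂ν, p ∈ K) (hν' : ∀ᵐ p ∂ν', p ∈ K)
    (hmom : ∀ m n : ℕ, ∫ p, p.1 ^ m * p.2 ^ n ∂ν = ∫ p, p.1 ^ m * p.2 ^ n ∂ν') : ν = ν' := by
  haveI : CompactSpace K := isCompact_iff_compactSpace.mp hK
  set fstK : C(K, ℝ) := ⟨fun x => (x : ℝ×ℝ).1, by fun_prop⟩ with hfstK
  set sndK : C(K, ℝ) := ⟨fun x => (x : ℝ×ℝ).2, by fun_prop⟩ with hsndK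
  set A : Subalgebra ℝ C(K, ℝ) := Algebra.adjoin ℝ {fstK, sndK} with hA
  have hsep : A.SeparatesPoints := by
    intro x y hxy
    have hne : (x : ℝ×ℝ) ≠ (y : ℝ×ℝ) := Subtype.coe_injective.ne hxy
    have hne2 : ¬((x : ℝ×ℝ).1 = (y : ℝ×ℝ).1 ∧ (x : ℝ×ℝ).2 = (y : ℝ×ℝ).2) :=
      fun h => hne (Prod.ext h.1 h.2)
    push_neg at hne2
    by_cases h1 : (x : ℝ×ℝ).1 = (y : ℝ×ℝ).1
    · exact ⟨sndK, ⟨sndK, Algebra.subset_adjoin (by simp), rfl⟩, hne2 h1⟩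
    · exact ⟨fstK, ⟨fstK, Algebra.subset_adjoin (by simp), rfl⟩, h1⟩
  have hlift : ∀ h ∈ A, ∃ H ∈ Algebra.adjoin ℝ ({fun p => p.1, fun p => p.2} : Set (ℝ×ℝ → ℝ)),
      ∀ x : K, H (x : ℝ×ℝ) = h x := by
    intro h hh
    induction hh using Algebra.adjoin_induction with
    | mem g hg =>
      rcases hg with rfl | rfl
      · exact ⟨fun p => p.1, Algebra.subset_adjoin (by simp), fun x => rfl⟩
      · exact ⟨fun p => p.2, Algebra.subset_adjoin (by simp), fun x => rfl⟩
    | algebraMap r =>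
      exact ⟨algebraMap ℝ _ r, Subalgebra.algebraMap_mem _ r, fun x => by
        simp [Algebra.algebraMap_eq_smul_one]⟩
    | add a b ha hb iha ihb =>
      obtain ⟨Ha, hHa, ea⟩ := iha
      obtain ⟨Hb, hHb, eb⟩ := ihb
      exact ⟨Ha + Hb, add_mem hHa hHb, fun x => by simp [ea x, eb x]⟩
    | mul a b ha hb iha ihb =>
      obtain ⟨Ha, hHa, ea⟩ := iha
      obtain ⟨Hb, hHb, eb⟩ := ihb
      exact ⟨Ha * Hb, mul_mem hHa hHb, fun x => by simp [ea x, eb x]⟩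
  -- integrals of bounded continuous real functions agree
  have key : ∀ g : ℝ×ℝ → ℝ, Continuous g → (∃ M : ℝ, ∀ p, |g p| ≤ M) →
      ∫ p, g p ∂ν = ∫ p, g p ∂ν' := by
    intro g hg hgb
    have hInt : Integrable g ν := aux_integrable_of_concentrated hK hν hg
    have hInt' : Integrable g ν' := aux_integrable_of_concentrated hK hν' hg
    have hle : ∀ ε : ℝ, 0 < ε → |∫ p, g p ∂ν - ∫ p, g p ∂ν'| ≤ 2 * ε := by
      intro ε hε
      obtain ⟨gA, hgA⟩ := ContinuousMap.exists_mem_subalgebra_near_continuous_of_separatesPoints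
        A hsep (fun x : K => g x) (hg.comp continuous_subtype_val) ε hε
      obtain ⟨H, hHmem, hHeq⟩ := hlift gA gA.2
      obtain ⟨hHc, hHint⟩ := aux_integral_eq_of_adjoin hK hν hν' hmom hHmem
      have hb : ∀ x ∈ K, ‖g x - H x‖ ≤ ε := by
        intro x hx
        have := hgA ⟨x, hx⟩
        rw [hHeq ⟨x, hx⟩]
        rw [← norm_neg]
        simpa [neg_sub] using this.le
      have hIH : Integrable H ν := aux_integrable_of_concentrated hK hν hHc
      have hIH' : Integrable H ν' := aux_integrable_of_concentrated hK hν' hHc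
      have e1 : ‖∫ p, (g p - H p) ∂ν‖ ≤ ε := by
        calc ‖∫ p, (g p - H p) ∂ν‖ ≤ ε * (ν Set.univ).toReal :=
          norm_integral_le_of_norm_le_const (by filter_upwards [hν] with p hp using hb p hp)
        _ = ε := by simp
      have e2 : ‖∫ p, (g p - H p) ∂ν'‖ ≤ ε := by
        calc ‖∫ p, (g p - H p) ∂ν'‖ ≤ ε * (ν' Set.univ).toReal :=
          norm_integral_le_of_norm_le_const (by filter_upwards [hν'] with p hp using hb p hp)
        _ = ε := by simp
      have : ∫ p, g p ∂ν - ∫ p, g p ∂ν'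
          = (∫ p, (g p - H p) ∂ν) - (∫ p, (g p - H p) ∂ν') := by
        rw [integral_sub hInt hIH, integral_sub hInt' hIH', hHint]; ring
      rw [this]
      calc |(∫ p, (g p - H p) ∂ν) - (∫ p, (g p - H p) ∂ν')|
          ≤ |∫ p, (g p - H p) ∂ν| + |∫ p, (g p - H p) ∂ν'| := abs_sub _ _
        _ ≤ ε + ε := add_le_add e1 e2
        _ = 2 * ε := by ring
    by_contra hne
    have habs : 0 < |∫ p, g p ∂ν - ∫ p, g p ∂ν'| := abs_pos.mpr (sub_ne_zero.mpr hne)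
    have := hle (|∫ p, g p ∂ν - ∫ p, g p ∂ν'| / 4) (by linarith)
    linarith
  apply ext_of_forall_lintegral_eq_of_IsFiniteMeasure
  intro f
  have hint : ∫ p, (f p : ℝ) ∂ν = ∫ p, (f p : ℝ) ∂ν' := by
    refine key _ (by continuity) ⟨(nndist 0 f : ℝ), fun p => ?_⟩
    rw [abs_of_nonneg (f p).coe_nonneg]
    exact_mod_cast f.apply_le_nndist_zero p
  have h1 := BoundedContinuousFunction.toReal_lintegral_coe_eq_integral f ν
  have h2 := BoundedContinuousFunction.toReal_lintegral_coe_eq_integral f ν'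
  have fin1 := BoundedContinuousFunction.lintegral_lt_top_of_nnreal ν f
  have fin2 := BoundedContinuousFunction.lintegral_lt_top_of_nnreal ν' f
  rw [← ENNReal.toReal_eq_toReal_iff' fin1.ne fin2.ne]
  rw [h1, h2, hint]

lemma aux_moments {Ω : Type*} [MeasurableSpace Ω] (μ : Measure Ω) [IsProbabilityMeasure μ]
    (X Y X' Y' : Ω → ℝ)
    (hX : Measurable X) (hY : Measurable Y) (hX' : Measurable X') (hY' : Measurable Y')
    (C : ℝ) (hbX : ∀ᵐ ω ∂μ, |X ω| ≤ C) (hbY : ∀ᵐ ω ∂μ, |Y ω| ≤ C)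
    (hbX' : ∀ᵐ ω ∂μ, |X' ω| ≤ C) (hbY' : ∀ᵐ ω ∂μ, |Y' ω| ≤ C)
    (hid : Measure.map (fun ω => (X ω, Y ω)) μ = Measure.map (fun ω => (X' ω, Y' ω)) μ)
    (hindep_pairs : IndepFun (fun ω => (X ω, Y ω)) (fun ω => (X' ω, Y' ω)) μ)
    (hsym : Measure.map (fun ω => (X ω, Y ω)) μ = Measure.map (fun ω => (-X ω, -Y ω)) μ)
    (hindep_diff : IndepFun (X - X') (Y - Y') μ) :
    ∀ m n : ℕ, ∫ ω, X ω ^ m * Y ω ^ n ∂μ = (∫ ω, X ω ^ m ∂μ) * (∫ ω, Y ω ^ n ∂μ) := by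
  have hpm : Measurable (fun ω => (X ω, Y ω)) := hX.prodMk hY
  have hpm' : Measurable (fun ω => (X' ω, Y' ω)) := hX'.prodMk hY'
  set u : ℕ → ℕ → ℝ := fun m n => ∫ ω, X ω ^ m * Y ω ^ n ∂μ with hu
  -- integrability of 4-fold products
  have hint4 : ∀ j k l r : ℕ, Integrable (fun ω => X ω ^ j * Y ω ^ k * (X' ω ^ l * Y' ω ^ r)) μ := by
    intro j k l r
    refine Integrable.mono' (integrable_const (C^j * C^k * (C^l * C^r)))
      (((hX.pow_const j).mul (hY.pow_const k)).mul
        ((hX'.pow_const l).mul (hY'.pow_const r))).aestronglyMeasurable ?_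
    filter_upwards [hbX, hbY, hbX', hbY'] with ω h1 h2 h3 h4
    have hC : 0 ≤ C := (abs_nonneg _).trans h1
    rw [Real.norm_eq_abs, abs_mul, abs_mul, abs_mul, abs_pow, abs_pow, abs_pow, abs_pow]
    gcongr <;> first | positivity | exact abs_nonneg _ | assumption
  have hint2 : ∀ j k : ℕ, Integrable (fun ω => X ω ^ j * Y ω ^ k) μ := by
    intro j k
    have := hint4 j k 0 0
    simpa using this
  have hint2' : ∀ l r : ℕ, Integrable (fun ω => X' ω ^ l * Y' ω ^ r) μ := by
    intro l r
    have := hint4 0 0 l r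
    simpa using this
  -- odd moments vanish
  have hodd : ∀ m n : ℕ, Odd (m + n) → u m n = 0 := by
    intro m n h
    have hpm2 : Measurable (fun ω => (-X ω, -Y ω)) := (hX.neg).prodMk (hY.neg)
    have h1 : ∫ p : ℝ×ℝ, p.1 ^ m * p.2 ^ n ∂(μ.map (fun ω => (X ω, Y ω)))
        = ∫ p : ℝ×ℝ, p.1 ^ m * p.2 ^ n ∂(μ.map (fun ω => (-X ω, -Y ω))) := by rw [hsym]
    rw [integral_map hpm.aemeasurable (Continuous.aestronglyMeasurable (by fun_prop)),
      integral_map hpm2.aemeasurable (Continuous.aestronglyMeasurable (by fun_prop))] at h1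
    have h2 : ∀ ω, (-X ω) ^ m * (-Y ω) ^ n = (-1 : ℝ) ^ (m + n) * (X ω ^ m * Y ω ^ n) := by
      intro ω; rw [neg_pow, neg_pow, pow_add]; ring
    simp_rw [h2, integral_const_mul] at h1
    rw [h.neg_one_pow] at h1
    have : u m n = ∫ ω, X ω ^ m * Y ω ^ n ∂μ := rfl
    rw [this] at *
    linarith
  -- cross moments
  have cross : ∀ j k l r : ℕ, ∫ ω, (X ω ^ j * Y ω ^ k) * (X' ω ^ l * Y' ω ^ r) ∂μ
      = u j k * u l r := by
    intro j k l r
    have hI : IndepFun ((fun p : ℝ×ℝ => p.1 ^ j * p.2 ^ k) ∘ (fun ω => (X ω, Y ω)))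
        ((fun p : ℝ×ℝ => p.1 ^ l * p.2 ^ r) ∘ (fun ω => (X' ω, Y' ω))) μ :=
      hindep_pairs.comp (by fun_prop) (by fun_prop)
    have h1 := hI.integral_mul_eq_mul_integral (hint2 j k).1 (hint2' l r).1
    have h2 : ∫ ω, X' ω ^ l * Y' ω ^ r ∂μ = u l r := by
      have e1 : ∫ ω, X' ω ^ l * Y' ω ^ r ∂μ
          = ∫ p : ℝ×ℝ, p.1 ^ l * p.2 ^ r ∂(μ.map (fun ω => (X' ω, Y' ω))) := by
        rw [integral_map hpm'.aemeasurable (Continuous.aestronglyMeasurable (by fun_prop))]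
      have e2 : u l r = ∫ p : ℝ×ℝ, p.1 ^ l * p.2 ^ r ∂(μ.map (fun ω => (X ω, Y ω))) := by
        rw [hu, integral_map hpm.aemeasurable (Continuous.aestronglyMeasurable (by fun_prop))]
      rw [e1, e2, hid]
    rw [← h2]
    exact h1
  -- a and b through u
  have ha0 : ∀ m : ℕ, ∫ ω, X ω ^ m ∂μ = u m 0 := by intro m; rw [hu]; simp
  have hb0 : ∀ n : ℕ, ∫ ω, Y ω ^ n ∂μ = u 0 n := by intro n; rw [hu]; simp
  have hu00 : u 0 0 = 1 := by rw [hu]; simp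
  -- expansion of the diff moments as double sums
  have expandA : ∀ m n : ℕ, ∫ ω, (X ω - X' ω) ^ m * (Y ω - Y' ω) ^ n ∂μ
      = ∑ j ∈ range (m+1), ∑ k ∈ range (n+1),
          ((-1:ℝ)^(j+m) * m.choose j * ((-1:ℝ)^(k+n) * n.choose k)) *
            (u j k * u (m-j) (n-k)) := by
    intro m n
    have hpt : ∀ ω, (X ω - X' ω) ^ m * (Y ω - Y' ω) ^ n
        = ∑ j ∈ range (m+1), ∑ k ∈ range (n+1),
            ((-1:ℝ)^(j+m) * m.choose j * ((-1:ℝ)^(k+n) * n.choose k)) *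
              (X ω ^ j * Y ω ^ k * (X' ω ^ (m-j) * Y' ω ^ (n-k))) := by
      intro ω
      rw [sub_pow, sub_pow, Finset.sum_mul_sum]
      exact sum_congr rfl fun j _ => sum_congr rfl fun k _ => by ring
    rw [integral_congr_ae (Filter.Eventually.of_forall hpt)]
    rw [integral_finset_sum _ (fun j _ => integrable_finset_sum _
      (fun k _ => ((hint4 j k (m-j) (n-k)).const_mul _)))]
    refine sum_congr rfl fun j _ => ?_
    rw [integral_finset_sum _ (fun k _ => ((hint4 j k (m-j) (n-k)).const_mul _))]
    refine sum_congr rfl fun k _ => ?_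
    rw [integral_const_mul, cross j k (m-j) (n-k)]
  -- expansion of single diff moments
  have expandBX : ∀ m : ℕ, ∫ ω, (X ω - X' ω) ^ m ∂μ
      = ∑ j ∈ range (m+1), ((-1:ℝ)^(j+m) * m.choose j) * (u j 0 * u (m-j) 0) := by
    intro m
    have hpt : ∀ ω, (X ω - X' ω) ^ m
        = ∑ j ∈ range (m+1), ((-1:ℝ)^(j+m) * m.choose j) * (X ω ^ j * X' ω ^ (m-j)) := by
      intro ω
      rw [sub_pow]
      exact sum_congr rfl fun j _ => by ring
    have hint1 : ∀ j l : ℕ, Integrable (fun ω => X ω ^ j * X' ω ^ l) μ := by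
      intro j l
      have := hint4 j 0 l 0
      simpa using this
    rw [integral_congr_ae (Filter.Eventually.of_forall hpt)]
    rw [integral_finset_sum _ (fun j _ => ((hint1 j (m-j)).const_mul _))]
    refine sum_congr rfl fun j _ => ?_
    rw [integral_const_mul]
    congr 1
    have := cross j 0 (m-j) 0
    simp only [pow_zero, mul_one] at this
    exact this
  have expandBY : ∀ n : ℕ, ∫ ω, (Y ω - Y' ω) ^ n ∂μ
      = ∑ k ∈ range (n+1), ((-1:ℝ)^(k+n) * n.choose k) * (u 0 k * u 0 (n-k)) := by
    intro n
    have hpt : ∀ ω, (Y ω - Y' ω) ^ n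
        = ∑ k ∈ range (n+1), ((-1:ℝ)^(k+n) * n.choose k) * (Y ω ^ k * Y' ω ^ (n-k)) := by
      intro ω
      rw [sub_pow]
      exact sum_congr rfl fun k _ => by ring
    have hint1 : ∀ k r : ℕ, Integrable (fun ω => Y ω ^ k * Y' ω ^ r) μ := by
      intro k r
      have := hint4 0 k 0 r
      simpa using this
    rw [integral_congr_ae (Filter.Eventually.of_forall hpt)]
    rw [integral_finset_sum _ (fun k _ => ((hint1 k (n-k)).const_mul _))]
    refine sum_congr rfl fun k _ => ?_
    rw [integral_const_mul]
    congr 1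
    have := cross 0 k 0 (n-k)
    simp only [pow_zero, one_mul] at this
    exact this
  -- diff factorization
  have hdiff : ∀ m n : ℕ, ∫ ω, (X ω - X' ω) ^ m * (Y ω - Y' ω) ^ n ∂μ
      = (∫ ω, (X ω - X' ω) ^ m ∂μ) * (∫ ω, (Y ω - Y' ω) ^ n ∂μ) := by
    intro m n
    have hI : IndepFun ((fun t : ℝ => t ^ m) ∘ (X - X')) ((fun t : ℝ => t ^ n) ∘ (Y - Y')) μ :=
      hindep_diff.comp (by fun_prop) (by fun_prop)
    have int1 : Integrable (fun ω => (X ω - X' ω) ^ m) μ := by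
      refine Integrable.mono' (integrable_const ((C + C) ^ m))
        ((hX.sub hX').pow_const m).aestronglyMeasurable ?_
      filter_upwards [hbX, hbX'] with ω h1 h2
      rw [Real.norm_eq_abs, abs_pow]
      exact pow_le_pow_left₀ (abs_nonneg _) ((abs_sub _ _).trans (add_le_add h1 h2)) m
    have int2 : Integrable (fun ω => (Y ω - Y' ω) ^ n) μ := by
      refine Integrable.mono' (integrable_const ((C + C) ^ n))
        ((hY.sub hY').pow_const n).aestronglyMeasurable ?_
      filter_upwards [hbY, hbY'] with ω h1 h2
      rw [Real.norm_eq_abs, abs_pow]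
      exact pow_le_pow_left₀ (abs_nonneg _) ((abs_sub _ _).trans (add_le_add h1 h2)) n
    exact hI.integral_mul_eq_mul_integral int1.1 int2.1
  -- the key induction
  have key : ∀ N : ℕ, ∀ m n : ℕ, m + n = N → u m n = u m 0 * u 0 n := by
    intro N
    induction N using Nat.strong_induction_on with
    | _ N ih =>
      intro m n hmn
      rcases Nat.eq_zero_or_pos N with hN | hN
      · have hm : m = 0 := by omega
        have hn : n = 0 := by omega
        subst hm; subst hn
        rw [hu00]; norm_num
      rcases Nat.even_or_odd (m + n) with hpar | hpar
      · -- even case : use the sum identity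
        set T : ℕ × ℕ → ℝ := fun q =>
          ((-1:ℝ)^(q.1+m) * m.choose q.1 * ((-1:ℝ)^(q.2+n) * n.choose q.2)) *
            (u q.1 q.2 * u (m-q.1) (n-q.2) - (u q.1 0 * u 0 q.2) * (u (m-q.1) 0 * u 0 (n-q.2)))
          with hT
        have hS : ∑ q ∈ range (m+1) ×ˢ range (n+1), T q = 0 := by
          rw [Finset.sum_product]
          have e1 := expandA m n
          have e2 := hdiff m n
          rw [expandBX m, expandBY n] at e2
          rw [Finset.sum_mul_sum] at e2
          have e3 : ∑ j ∈ range (m+1), ∑ k ∈ range (n+1),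
              ((-1:ℝ)^(j+m) * m.choose j * ((-1:ℝ)^(k+n) * n.choose k)) *
                ((u j 0 * u 0 k) * (u (m-j) 0 * u 0 (n-k)))
              = ∑ j ∈ range (m+1), ∑ k ∈ range (n+1),
                ((-1:ℝ)^(j+m) * ↑(m.choose j) * (u j 0 * u (m-j) 0)) *
                  ((-1:ℝ)^(k+n) * ↑(n.choose k) * (u 0 k * u 0 (n-k))) :=
            sum_congr rfl fun j _ => sum_congr rfl fun k _ => by ring
          calc ∑ j ∈ range (m+1), ∑ k ∈ range (n+1), T (j, k)
              = (∑ j ∈ range (m+1), ∑ k ∈ range (n+1),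
                  ((-1:ℝ)^(j+m) * m.choose j * ((-1:ℝ)^(k+n) * n.choose k)) *
                    (u j k * u (m-j) (n-k)))
                - ∑ j ∈ range (m+1), ∑ k ∈ range (n+1),
                  ((-1:ℝ)^(j+m) * m.choose j * ((-1:ℝ)^(k+n) * n.choose k)) *
                    ((u j 0 * u 0 k) * (u (m-j) 0 * u 0 (n-k))) := by
                rw [← Finset.sum_sub_distrib]
                refine sum_congr rfl fun j _ => ?_
                rw [← Finset.sum_sub_distrib]
                refine sum_congr rfl fun k _ => ?_
                rw [hT]; ring
            _ = 0 := by rw [← e1, e3, ← e2, sub_self]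
        have hsub : ({(0,0),(m,n)} : Finset (ℕ×ℕ)) ⊆ range (m+1) ×ˢ range (n+1) := by
          intro q hq
          simp only [Finset.mem_insert, Finset.mem_singleton] at hq
          rcases hq with rfl | rfl <;> simp [Finset.mem_product] <;> omega
        have hzero : ∀ q ∈ range (m+1) ×ˢ range (n+1),
            q ∉ ({(0,0),(m,n)} : Finset (ℕ×ℕ)) → T q = 0 := by
          rintro ⟨j, k⟩ hq hnot
          simp only [Finset.mem_product, Finset.mem_range] at hq
          simp only [Finset.mem_insert, Finset.mem_singleton, Prod.mk.injEq, not_or,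
            not_and_or] at hnot
          have hjm : j ≤ m := by omega
          have hkn : k ≤ n := by omega
          have h1 : j + k < N := by
            rcases hnot.2 with h | h <;> omega
          have h2 : (m - j) + (n - k) < N := by
            rcases hnot.1 with h | h <;> omega
          have e1 := ih (j + k) h1 j k rfl
          have e2 := ih ((m - j) + (n - k)) h2 (m - j) (n - k) rfl
          rw [hT]
          simp only
          rw [e1, e2]
          ring
        have hsum2 : ∑ q ∈ ({(0,0),(m,n)} : Finset (ℕ×ℕ)), T q = 0 := by
          rw [Finset.sum_subset hsub hzero]
          exact hS
        have hne : ((0,0) : ℕ×ℕ) ≠ (m,n) := by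
          intro h
          rw [Prod.mk.injEq] at h
          omega
        rw [Finset.sum_pair hne] at hsum2
        have hT00 : T (0,0) = (-1:ℝ)^(m+n) * (u m n - u m 0 * u 0 n) := by
          rw [hT]
          simp only [Nat.sub_zero, Nat.choose_zero_right, Nat.cast_one, pow_zero]
          rw [hu00]
          ring
        have hTmn : T (m,n) = u m n - u m 0 * u 0 n := by
          rw [hT]
          simp only [Nat.sub_self, Nat.choose_self, Nat.cast_one]
          rw [hu00]
          have h1 : ((-1:ℝ))^(m+m) = 1 := by
            rw [← two_mul]; exact Even.neg_one_pow (even_two_mul m)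
          have h2 : ((-1:ℝ))^(n+n) = 1 := by
            rw [← two_mul]; exact Even.neg_one_pow (even_two_mul n)
          rw [h1, h2]
          ring
        rw [hT00, hTmn, hpar.neg_one_pow] at hsum2
        linarith
      · -- odd case
        rw [hodd m n hpar]
        rcases Nat.even_or_odd m with hm | hm
        · have hn : Odd n := by
            rcases hm with ⟨p, hp⟩
            rcases hpar with ⟨q, hq⟩
            exact ⟨q - p, by omega⟩
          rw [hodd 0 n (by simpa using hn)]
          ring
        · rw [hodd m 0 (by simpa using hm)]
          ring
  intro m n
  rw [ha0, hb0]
  exact key (m + n) m n rfl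

theorem stmt_0 {Ω : Type*} [MeasurableSpace Ω] (μ : Measure Ω) [IsProbabilityMeasure μ]
    (X Y X' Y' : Ω → ℝ)
    (hX : Measurable X) (hY : Measurable Y) (hX' : Measurable X') (hY' : Measurable Y')
    (C : ℝ) (hbX : ∀ᵐ ω ∂μ, |X ω| ≤ C) (hbY : ∀ᵐ ω ∂μ, |Y ω| ≤ C)
    (hid : Measure.map (fun ω => (X ω, Y ω)) μ = Measure.map (fun ω => (X' ω, Y' ω)) μ)
    (hindep_pairs : IndepFun (fun ω => (X ω, Y ω)) (fun ω => (X' ω, Y' ω)) μ)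
    (hsym : Measure.map (fun ω => (X ω, Y ω)) μ = Measure.map (fun ω => (-X ω, -Y ω)) μ)
    (hindep_diff : IndepFun (X - X') (Y - Y') μ) :
    IndepFun X Y μ := by
  have hpm0 : Measurable (fun ω => (X ω, Y ω)) := hX.prodMk hY
  have hpm0' : Measurable (fun ω => (X' ω, Y' ω)) := hX'.prodMk hY'
  have hbX' : ∀ᵐ ω ∂μ, |X' ω| ≤ C := by
    have hs : MeasurableSet {p : ℝ×ℝ | |p.1| ≤ C} := measurableSet_le (by fun_prop) measurable_const
    have h1 : μ.map (fun ω => (X' ω, Y' ω)) {p : ℝ×ℝ | |p.1| ≤ C}ᶜ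
        = μ.map (fun ω => (X ω, Y ω)) {p : ℝ×ℝ | |p.1| ≤ C}ᶜ := by rw [hid]
    rw [Measure.map_apply hpm0' hs.compl, Measure.map_apply hpm0 hs.compl] at h1
    rw [ae_iff]
    rw [show {ω | ¬ |X' ω| ≤ C} = (fun ω => (X' ω, Y' ω)) ⁻¹' {p : ℝ×ℝ | |p.1| ≤ C}ᶜ by
      ext ω; simp]
    rw [h1]
    rw [show (fun ω => (X ω, Y ω)) ⁻¹' {p : ℝ×ℝ | |p.1| ≤ C}ᶜ = {ω | ¬ |X ω| ≤ C} by ext ω; simp]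
    exact ae_iff.mp hbX
  have hbY' : ∀ᵐ ω ∂μ, |Y' ω| ≤ C := by
    have hs : MeasurableSet {p : ℝ×ℝ | |p.2| ≤ C} := measurableSet_le (by fun_prop) measurable_const
    have h1 : μ.map (fun ω => (X' ω, Y' ω)) {p : ℝ×ℝ | |p.2| ≤ C}ᶜ
        = μ.map (fun ω => (X ω, Y ω)) {p : ℝ×ℝ | |p.2| ≤ C}ᶜ := by rw [hid]
    rw [Measure.map_apply hpm0' hs.compl, Measure.map_apply hpm0 hs.compl] at h1
    rw [ae_iff]
    rw [show {ω | ¬ |Y' ω| ≤ C} = (fun ω => (X' ω, Y' ω)) ⁻¹' {p : ℝ×ℝ | |p.2| ≤ C}ᶜ by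
      ext ω; simp]
    rw [h1]
    rw [show (fun ω => (X ω, Y ω)) ⁻¹' {p : ℝ×ℝ | |p.2| ≤ C}ᶜ = {ω | ¬ |Y ω| ≤ C} by ext ω; simp]
    exact ae_iff.mp hbY
  have hmom : ∀ m n : ℕ, ∫ ω, X ω ^ m * Y ω ^ n ∂μ = (∫ ω, X ω ^ m ∂μ) * (∫ ω, Y ω ^ n ∂μ) :=
    aux_moments μ X Y X' Y' hX hY hX' hY' C hbX hbY hbX' hbY' hid hindep_pairs hsym hindep_diff
  have hpm : Measurable (fun ω => (X ω, Y ω)) := hX.prodMk hY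
  set K : Set (ℝ×ℝ) := Set.Icc (-C) C ×ˢ Set.Icc (-C) C with hKdef
  have hK : IsCompact K := isCompact_Icc.prod isCompact_Icc
  have hKm : MeasurableSet K := (measurableSet_Icc).prod measurableSet_Icc
  haveI : IsProbabilityMeasure (μ.map (fun ω => (X ω, Y ω))) :=
    Measure.isProbabilityMeasure_map hpm.aemeasurable
  haveI : IsProbabilityMeasure (μ.map X) := Measure.isProbabilityMeasure_map hX.aemeasurable
  haveI : IsProbabilityMeasure (μ.map Y) := Measure.isProbabilityMeasure_map hY.aemeasurable
  have hνK : ∀ᵐ p ∂(μ.map (fun ω => (X ω, Y ω))), p ∈ K := by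
    refine (MeasureTheory.ae_map_iff (p := fun p => p ∈ K) hpm.aemeasurable hKm).mpr ?_
    filter_upwards [hbX, hbY] with ω h1 h2
    exact ⟨abs_le.mp h1, abs_le.mp h2⟩
  have hmX : (μ.map X) (Set.Icc (-C) C)ᶜ = 0 := by
    rw [Measure.map_apply hX measurableSet_Icc.compl]
    rw [ae_iff] at hbX
    refine le_antisymm (le_of_le_of_eq (measure_mono ?_) hbX) (zero_le ..)
    intro ω hω
    simpa [abs_le] using hω
  have hmY : (μ.map Y) (Set.Icc (-C) C)ᶜ = 0 := by
    rw [Measure.map_apply hY measurableSet_Icc.compl]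
    rw [ae_iff] at hbY
    refine le_antisymm (le_of_le_of_eq (measure_mono ?_) hbY) (zero_le ..)
    intro ω hω
    simpa [abs_le] using hω
  have hν'K : ∀ᵐ p ∂((μ.map X).prod (μ.map Y)), p ∈ K := by
    rw [ae_iff]
    have hsub : {p : ℝ×ℝ | ¬ p ∈ K}
        ⊆ ((Set.Icc (-C) C)ᶜ ×ˢ Set.univ) ∪ (Set.univ ×ˢ (Set.Icc (-C) C)ᶜ) := by
      intro p hp
      simp only [hKdef, Set.mem_prod, Set.mem_setOf_eq, not_and_or] at hp
      rcases hp with h | h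
      · exact Or.inl ⟨h, trivial⟩
      · exact Or.inr ⟨trivial, h⟩
    have h1 : ((μ.map X).prod (μ.map Y))
        (((Set.Icc (-C) C)ᶜ ×ˢ Set.univ) ∪ (Set.univ ×ˢ (Set.Icc (-C) C)ᶜ)) = 0 := by
      refine le_antisymm (le_trans (measure_union_le _ _) ?_) (zero_le ..)
      rw [Measure.prod_prod, Measure.prod_prod, hmX, hmY]
      simp
    exact measure_mono_null hsub h1
  have hmomν : ∀ m n : ℕ, ∫ p : ℝ×ℝ, p.1 ^ m * p.2 ^ n ∂(μ.map (fun ω => (X ω, Y ω)))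
      = ∫ p : ℝ×ℝ, p.1 ^ m * p.2 ^ n ∂((μ.map X).prod (μ.map Y)) := by
    intro m n
    rw [integral_map hpm.aemeasurable (Continuous.aestronglyMeasurable (by fun_prop))]
    rw [show (fun p : ℝ×ℝ => p.1 ^ m * p.2 ^ n) = fun p : ℝ×ℝ => (p.1 ^ m) * (p.2 ^ n) from rfl]
    rw [integral_prod_mul (fun x : ℝ => x ^ m) (fun y : ℝ => y ^ n)]
    rw [integral_map hX.aemeasurable (Continuous.aestronglyMeasurable (by fun_prop)),
      integral_map hY.aemeasurable (Continuous.aestronglyMeasurable (by fun_prop))]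
    exact hmom m n
  have := aux_measure_eq hK hνK hν'K hmomν
  rw [indepFun_iff_map_prod_eq_prod_map_map hX.aemeasurable hY.aemeasurable]
  exact this
end

section
/- Let (X,Y) and (X',Y') be i.i.d. random vectors with bounded symmetric joint distribution such that X-X' and Y-Y' are independent. Then for all nonnegative integers k and ℓ, E[X^k Y^ℓ] = E[X^k]·E[Y^ℓ]. -/
open MeasureTheory ProbabilityTheory

theorem stmt_1 {Ω : Type*} [MeasurableSpace Ω] (μ : Measure Ω) [IsProbabilityMeasure μ]
    (X Y X' Y' : Ω → ℝ)
    (hX : Measurable X) (hY : Measurable Y) (hX' : Measurable X') (hY' : Measurable Y')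
    (C : ℝ) (hbX : ∀ᵐ ω ∂μ, |X ω| ≤ C) (hbY : ∀ᵐ ω ∂μ, |Y ω| ≤ C)
    (hid : Measure.map (fun ω => (X ω, Y ω)) μ = Measure.map (fun ω => (X' ω, Y' ω)) μ)
    (hindep_pairs : IndepFun (fun ω => (X ω, Y ω)) (fun ω => (X' ω, Y' ω)) μ)
    (hsym : Measure.map (fun ω => (X ω, Y ω)) μ = Measure.map (fun ω => (-X ω, -Y ω)) μ)
    (hindep_diff : IndepFun (X - X') (Y - Y') μ) :
    ∀ k ℓ : ℕ, ∫ ω, X ω ^ k * Y ω ^ ℓ ∂μ = (∫ ω, X ω ^ k ∂μ) * ∫ ω, Y ω ^ ℓ ∂μ := by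
  classical
  have hXY : Measurable (fun ω => (X ω, Y ω)) := hX.prodMk hY
  have hXY' : Measurable (fun ω => (X' ω, Y' ω)) := hX'.prodMk hY'
  -- boundedness of X', Y'
  have hb' : ∀ᵐ ω ∂μ, |X' ω| ≤ C ∧ |Y' ω| ≤ C := by
    have hms : MeasurableSet {p : ℝ × ℝ | |p.1| ≤ C ∧ |p.2| ≤ C} :=
      (measurableSet_le measurable_fst.abs measurable_const).inter
        (measurableSet_le measurable_snd.abs measurable_const)
    have h0 : ∀ᵐ p ∂(μ.map (fun ω => (X ω, Y ω))), |p.1| ≤ C ∧ |p.2| ≤ C := by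
      rw [ae_map_iff hXY.aemeasurable hms]
      filter_upwards [hbX, hbY] with ω h1 h2
      exact ⟨h1, h2⟩
    rw [hid] at h0
    exact ae_of_ae_map hXY'.aemeasurable h0
  set M : ℕ → ℕ → ℝ := fun i j => ∫ ω, X ω ^ i * Y ω ^ j ∂μ with hMdef
  -- integrability of products
  have hInt : ∀ i j a b : ℕ,
      Integrable (fun ω => X ω ^ i * Y ω ^ j * (X' ω ^ a * Y' ω ^ b)) μ := by
    intro i j a b
    refine ⟨(((hX.pow_const i).mul (hY.pow_const j)).mul
      ((hX'.pow_const a).mul (hY'.pow_const b))).aestronglyMeasurable, ?_⟩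
    apply HasFiniteIntegral.of_bounded (C := |C| ^ i * |C| ^ j * (|C| ^ a * |C| ^ b))
    filter_upwards [hbX, hbY, hb'] with ω h1 h2 h34
    obtain ⟨h3, h4⟩ := h34
    have hb : ∀ {x : ℝ} {n : ℕ}, |x| ≤ C → |x| ^ n ≤ |C| ^ n := fun hx =>
      pow_le_pow_left₀ (abs_nonneg _) (hx.trans (le_abs_self C)) _
    simp only [Real.norm_eq_abs, abs_mul, abs_pow]
    exact mul_le_mul (mul_le_mul (hb h1) (hb h2) (by positivity) (by positivity))
      (mul_le_mul (hb h3) (hb h4) (by positivity) (by positivity))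
      (by positivity) (by positivity)
  have hIntXY : ∀ i j : ℕ, Integrable (fun ω => X ω ^ i * Y ω ^ j) μ := by
    intro i j; simpa using hInt i j 0 0
  have hIntXY' : ∀ a b : ℕ, Integrable (fun ω => X' ω ^ a * Y' ω ^ b) μ := by
    intro a b; simpa using hInt 0 0 a b
  have hM00 : M 0 0 = 1 := by simp [hMdef]
  -- identical distribution of the pairs transfers moments
  have hmap : ∀ a b : ℕ, ∫ ω, X' ω ^ a * Y' ω ^ b ∂μ = M a b := by
    intro a b
    have hm : Measurable (fun p : ℝ × ℝ => p.1 ^ a * p.2 ^ b) :=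
      (measurable_fst.pow_const a).mul (measurable_snd.pow_const b)
    have h1 : ∫ ω, X' ω ^ a * Y' ω ^ b ∂μ
        = ∫ p : ℝ × ℝ, p.1 ^ a * p.2 ^ b ∂(Measure.map (fun ω => (X' ω, Y' ω)) μ) :=
      (integral_map hXY'.aemeasurable hm.aestronglyMeasurable).symm
    rw [h1, ← hid, integral_map hXY.aemeasurable hm.aestronglyMeasurable]
  -- independence of pairs gives factorization of mixed moments
  have hprod : ∀ i j a b : ℕ,
      ∫ ω, X ω ^ i * Y ω ^ j * (X' ω ^ a * Y' ω ^ b) ∂μ = M i j * M a b := by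
    intro i j a b
    have h1 : IndepFun (fun ω => X ω ^ i * Y ω ^ j) (fun ω => X' ω ^ a * Y' ω ^ b) μ :=
      hindep_pairs.comp ((measurable_fst.pow_const i).mul (measurable_snd.pow_const j))
        ((measurable_fst.pow_const a).mul (measurable_snd.pow_const b))
    rw [h1.integral_fun_mul_eq_mul_integral (hIntXY i j).aestronglyMeasurable (hIntXY' a b).aestronglyMeasurable,
      hmap a b]
  -- symmetry: odd moments vanish
  have hsymM : ∀ i j : ℕ, Odd (i + j) → M i j = 0 := by
    intro i j hodd
    have hm : Measurable (fun p : ℝ × ℝ => p.1 ^ i * p.2 ^ j) :=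
      (measurable_fst.pow_const i).mul (measurable_snd.pow_const j)
    have hXYn : Measurable (fun ω => (-X ω, -Y ω)) := (hX.neg.prodMk hY.neg)
    have h1 : M i j = (-1 : ℝ) ^ (i + j) * M i j := by
      have e1 : M i j = ∫ p : ℝ × ℝ, p.1 ^ i * p.2 ^ j ∂(Measure.map (fun ω => (X ω, Y ω)) μ) :=
        (integral_map hXY.aemeasurable hm.aestronglyMeasurable).symm
      have e2 : ∀ ω : Ω, (-X ω) ^ i * (-Y ω) ^ j = (-1 : ℝ) ^ (i + j) * (X ω ^ i * Y ω ^ j) := by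
        intro ω
        rw [neg_pow, neg_pow, pow_add]
        ring
      calc M i j = ∫ p : ℝ × ℝ, p.1 ^ i * p.2 ^ j ∂(Measure.map (fun ω => (X ω, Y ω)) μ) := e1
        _ = ∫ p : ℝ × ℝ, p.1 ^ i * p.2 ^ j ∂(Measure.map (fun ω => (-X ω, -Y ω)) μ) := by
            rw [hsym]
        _ = ∫ ω, (-X ω) ^ i * (-Y ω) ^ j ∂μ :=
            integral_map hXYn.aemeasurable hm.aestronglyMeasurable
        _ = ∫ ω, (-1 : ℝ) ^ (i + j) * (X ω ^ i * Y ω ^ j) ∂μ := by simp_rw [e2]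
        _ = (-1 : ℝ) ^ (i + j) * M i j := by rw [integral_const_mul]
    rw [hodd.neg_one_pow] at h1
    linarith
  -- binomial expansions
  have expand : ∀ k ℓ : ℕ, ∫ ω, (X ω - X' ω) ^ k * (Y ω - Y' ω) ^ ℓ ∂μ
      = ∑ i ∈ Finset.range (k + 1), ∑ j ∈ Finset.range (ℓ + 1),
          ((-1 : ℝ) ^ (i + k) * (k.choose i) * ((-1 : ℝ) ^ (j + ℓ) * (ℓ.choose j)))
            * (M i j * M (k - i) (ℓ - j)) := by
    intro k ℓ
    have h1 : ∀ ω : Ω, (X ω - X' ω) ^ k * (Y ω - Y' ω) ^ ℓ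
        = ∑ i ∈ Finset.range (k + 1), ∑ j ∈ Finset.range (ℓ + 1),
            ((-1 : ℝ) ^ (i + k) * (k.choose i) * ((-1 : ℝ) ^ (j + ℓ) * (ℓ.choose j)))
              * (X ω ^ i * Y ω ^ j * (X' ω ^ (k - i) * Y' ω ^ (ℓ - j))) := by
      intro ω
      rw [sub_pow, sub_pow, Finset.sum_mul_sum]
      refine Finset.sum_congr rfl fun i _ => Finset.sum_congr rfl fun j _ => ?_
      ring
    simp_rw [h1]
    rw [integral_finset_sum _ (fun i _ => integrable_finset_sum _
      (fun j _ => (hInt i j (k - i) (ℓ - j)).const_mul _))]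
    refine Finset.sum_congr rfl fun i _ => ?_
    rw [integral_finset_sum _ (fun j _ => (hInt i j (k - i) (ℓ - j)).const_mul _)]
    refine Finset.sum_congr rfl fun j _ => ?_
    rw [integral_const_mul, hprod]
  have expandX : ∀ k : ℕ, ∫ ω, (X ω - X' ω) ^ k ∂μ
      = ∑ i ∈ Finset.range (k + 1),
          ((-1 : ℝ) ^ (i + k) * (k.choose i)) * (M i 0 * M (k - i) 0) := by
    intro k
    have h1 : ∀ ω : Ω, (X ω - X' ω) ^ k
        = ∑ i ∈ Finset.range (k + 1),
            ((-1 : ℝ) ^ (i + k) * (k.choose i))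
              * (X ω ^ i * Y ω ^ 0 * (X' ω ^ (k - i) * Y' ω ^ 0)) := by
      intro ω
      rw [sub_pow]
      exact Finset.sum_congr rfl fun i _ => by ring
    simp_rw [h1]
    rw [integral_finset_sum _ (fun i _ => (hInt i 0 (k - i) 0).const_mul _)]
    exact Finset.sum_congr rfl fun i _ => by rw [integral_const_mul, hprod]
  have expandY : ∀ ℓ : ℕ, ∫ ω, (Y ω - Y' ω) ^ ℓ ∂μ
      = ∑ j ∈ Finset.range (ℓ + 1),
          ((-1 : ℝ) ^ (j + ℓ) * (ℓ.choose j)) * (M 0 j * M 0 (ℓ - j)) := by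
    intro ℓ
    have h1 : ∀ ω : Ω, (Y ω - Y' ω) ^ ℓ
        = ∑ j ∈ Finset.range (ℓ + 1),
            ((-1 : ℝ) ^ (j + ℓ) * (ℓ.choose j))
              * (X ω ^ 0 * Y ω ^ j * (X' ω ^ 0 * Y' ω ^ (ℓ - j))) := by
      intro ω
      rw [sub_pow]
      exact Finset.sum_congr rfl fun j _ => by ring
    simp_rw [h1]
    rw [integral_finset_sum _ (fun j _ => (hInt 0 j 0 (ℓ - j)).const_mul _)]
    exact Finset.sum_congr rfl fun j _ => by rw [integral_const_mul, hprod]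
  -- independence of differences
  have hdiffInt : ∀ k ℓ : ℕ, ∫ ω, (X ω - X' ω) ^ k * (Y ω - Y' ω) ^ ℓ ∂μ
      = (∫ ω, (X ω - X' ω) ^ k ∂μ) * ∫ ω, (Y ω - Y' ω) ^ ℓ ∂μ := by
    intro k ℓ
    have h1 : IndepFun (fun ω => (X ω - X' ω) ^ k) (fun ω => (Y ω - Y' ω) ^ ℓ) μ :=
      hindep_diff.comp (measurable_id.pow_const k) (measurable_id.pow_const ℓ)
    exact h1.integral_fun_mul_eq_mul_integral ((hX.sub hX').pow_const k).aestronglyMeasurable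
      ((hY.sub hY').pow_const ℓ).aestronglyMeasurable
  -- main induction
  have main : ∀ n : ℕ, ∀ k ℓ : ℕ, k + ℓ = n → M k ℓ = M k 0 * M 0 ℓ := by
    intro n
    induction n using Nat.strong_induction_on with
    | _ n ih =>
      intro k ℓ hn
      rcases Nat.eq_zero_or_pos k with hk0 | hk1
      · subst hk0; rw [hM00, one_mul]
      rcases Nat.eq_zero_or_pos ℓ with hl0 | hl1
      · subst hl0; rw [hM00, mul_one]
      rcases Nat.even_or_odd (k + ℓ) with heven | hodd
      · -- even case
        have e1 : ∑ i ∈ Finset.range (k + 1), ∑ j ∈ Finset.range (ℓ + 1),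
            ((-1 : ℝ) ^ (i + k) * (k.choose i) * ((-1 : ℝ) ^ (j + ℓ) * (ℓ.choose j)))
              * (M i j * M (k - i) (ℓ - j))
            = ∑ i ∈ Finset.range (k + 1), ∑ j ∈ Finset.range (ℓ + 1),
            ((-1 : ℝ) ^ (i + k) * (k.choose i) * ((-1 : ℝ) ^ (j + ℓ) * (ℓ.choose j)))
              * ((M i 0 * M 0 j) * (M (k - i) 0 * M 0 (ℓ - j))) := by
          rw [← expand k ℓ, hdiffInt k ℓ, expandX k, expandY ℓ, Finset.sum_mul_sum]
          exact Finset.sum_congr rfl fun i _ => Finset.sum_congr rfl fun j _ => by ring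
        have key : ∑ i ∈ Finset.range (k + 1), ∑ j ∈ Finset.range (ℓ + 1),
            (((-1 : ℝ) ^ (i + k) * (k.choose i) * ((-1 : ℝ) ^ (j + ℓ) * (ℓ.choose j)))
              * (M i j * M (k - i) (ℓ - j))
            - ((-1 : ℝ) ^ (i + k) * (k.choose i) * ((-1 : ℝ) ^ (j + ℓ) * (ℓ.choose j)))
              * ((M i 0 * M 0 j) * (M (k - i) 0 * M 0 (ℓ - j)))) = 0 := by
          simp only [Finset.sum_sub_distrib]
          rw [e1, sub_self]
        have hptwise : ∀ i ∈ Finset.range (k + 1), ∀ j ∈ Finset.range (ℓ + 1),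
            (((-1 : ℝ) ^ (i + k) * (k.choose i) * ((-1 : ℝ) ^ (j + ℓ) * (ℓ.choose j)))
              * (M i j * M (k - i) (ℓ - j))
            - ((-1 : ℝ) ^ (i + k) * (k.choose i) * ((-1 : ℝ) ^ (j + ℓ) * (ℓ.choose j)))
              * ((M i 0 * M 0 j) * (M (k - i) 0 * M 0 (ℓ - j))))
            = (if j = 0 then if i = 0 then M k ℓ - M k 0 * M 0 ℓ else 0 else 0)
              + (if j = ℓ then if i = k then M k ℓ - M k 0 * M 0 ℓ else 0 else 0) := by
          intro i hi j hj
          rw [Finset.mem_range] at hi hj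
          by_cases h00 : i = 0 ∧ j = 0
          · obtain ⟨rfl, rfl⟩ := h00
            have hc : (-1 : ℝ) ^ (0 + k) * ((-1 : ℝ) ^ (0 + ℓ)) = 1 := by
              rw [zero_add, zero_add, ← pow_add, heven.neg_one_pow]
            rw [if_pos rfl, if_pos rfl, if_neg (by omega : ¬(0 = ℓ))]
            simp only [Nat.sub_zero, Nat.choose_zero_right, Nat.cast_one, hM00]
            linear_combination (M k ℓ - M k 0 * M 0 ℓ) * hc
          by_cases hkl : i = k ∧ j = ℓ
          · obtain ⟨rfl, rfl⟩ := hkl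
            have hc : (-1 : ℝ) ^ (i + i) * ((-1 : ℝ) ^ (j + j)) = 1 := by
              rw [← pow_add, Even.neg_one_pow ⟨i + j, by ring⟩]
            rw [if_neg (by omega : ¬(j = 0)), if_pos rfl, if_pos rfl]
            simp only [Nat.sub_self, Nat.choose_self, Nat.cast_one, hM00]
            linear_combination (M i j - M i 0 * M 0 j) * hc
          · have hIH1 : M i j = M i 0 * M 0 j := by
              refine ih (i + j) (by omega) i j rfl
            have hIH2 : M (k - i) (ℓ - j) = M (k - i) 0 * M 0 (ℓ - j) := by
              refine ih ((k - i) + (ℓ - j)) (by omega) (k - i) (ℓ - j) rfl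
            rw [hIH1, hIH2]
            have z1 : (if j = 0 then if i = 0 then M k ℓ - M k 0 * M 0 ℓ else 0 else 0) = 0 := by
              by_cases hj0 : j = 0
              · rw [if_pos hj0, if_neg (by omega : ¬(i = 0))]
              · rw [if_neg hj0]
            have z2 : (if j = ℓ then if i = k then M k ℓ - M k 0 * M 0 ℓ else 0 else 0) = 0 := by
              by_cases hjl : j = ℓ
              · rw [if_pos hjl, if_neg (by omega : ¬(i = k))]
              · rw [if_neg hjl]
            rw [z1, z2]
            ring
        rw [Finset.sum_congr rfl (fun i hi => Finset.sum_congr rfl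
          (fun j hj => hptwise i hi j hj))] at key
        simp [Finset.sum_add_distrib, Finset.sum_ite_eq'] at key
        linarith
      · -- odd case
        rw [hsymM k ℓ hodd]
        rcases Nat.even_or_odd k with hk | hk
        · have hℓ : Odd ℓ := by
            obtain ⟨m, hm⟩ := hodd
            obtain ⟨a, ha⟩ := hk
            exact ⟨m - a, by omega⟩
          rw [hsymM 0 ℓ (by simpa using hℓ), mul_zero]
        · rw [hsymM k 0 (by simpa using hk), zero_mul]
  intro k ℓ
  have h := main (k + ℓ) k ℓ rfl
  simpa [hMdef] using h
end

section
/- Let (X,Y) and (X',Y') be i.i.d. integrable random vectors such that X-X' is independent of Y-Y'. Then E[XY] = E[X]E[Y]. -/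
open MeasureTheory ProbabilityTheory

theorem stmt_2 {Ω : Type*} [MeasurableSpace Ω] (μ : Measure Ω) [IsProbabilityMeasure μ]
    (X Y X' Y' : Ω → ℝ)
    (hX : Measurable X) (hY : Measurable Y) (hX' : Measurable X') (hY' : Measurable Y')
    (hiX : Integrable X μ) (hiY : Integrable Y μ)
    (hiXY : Integrable (fun ω => X ω * Y ω) μ)
    (hiX' : Integrable X' μ) (hiY' : Integrable Y' μ)
    (hid : Measure.map (fun ω => (X ω, Y ω)) μ = Measure.map (fun ω => (X' ω, Y' ω)) μ)
    (hindep_pairs : IndepFun (fun ω => (X ω, Y ω)) (fun ω => (X' ω, Y' ω)) μ)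
    (hindep_diff : IndepFun (X - X') (Y - Y') μ) :
    ∫ ω, X ω * Y ω ∂μ = (∫ ω, X ω ∂μ) * ∫ ω, Y ω ∂μ := by
  have hmXY : Measurable (fun ω => (X ω, Y ω)) := hX.prodMk hY
  have hmXY' : Measurable (fun ω => (X' ω, Y' ω)) := hX'.prodMk hY'
  -- independences via projections
  have hXY' : IndepFun X Y' μ := hindep_pairs.comp measurable_fst measurable_snd
  have hX'Y : IndepFun Y X' μ := hindep_pairs.comp measurable_snd measurable_fst
  -- equalities of moments from same law
  have hEX : ∫ ω, X' ω ∂μ = ∫ ω, X ω ∂μ := by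
    have h1 : ∫ ω, X ω ∂μ = ∫ p : ℝ × ℝ, p.1 ∂(Measure.map (fun ω => (X ω, Y ω)) μ) := by
      rw [integral_map hmXY.aemeasurable measurable_fst.aestronglyMeasurable]
    have h2 : ∫ ω, X' ω ∂μ = ∫ p : ℝ × ℝ, p.1 ∂(Measure.map (fun ω => (X' ω, Y' ω)) μ) := by
      rw [integral_map hmXY'.aemeasurable measurable_fst.aestronglyMeasurable]
    rw [h1, h2, hid]
  have hEY : ∫ ω, Y' ω ∂μ = ∫ ω, Y ω ∂μ := by
    have h1 : ∫ ω, Y ω ∂μ = ∫ p : ℝ × ℝ, p.2 ∂(Measure.map (fun ω => (X ω, Y ω)) μ) := by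
      rw [integral_map hmXY.aemeasurable measurable_snd.aestronglyMeasurable]
    have h2 : ∫ ω, Y' ω ∂μ = ∫ p : ℝ × ℝ, p.2 ∂(Measure.map (fun ω => (X' ω, Y' ω)) μ) := by
      rw [integral_map hmXY'.aemeasurable measurable_snd.aestronglyMeasurable]
    rw [h1, h2, hid]
  have hEXY : ∫ ω, X' ω * Y' ω ∂μ = ∫ ω, X ω * Y ω ∂μ := by
    have h1 : ∫ ω, X ω * Y ω ∂μ
        = ∫ p : ℝ × ℝ, p.1 * p.2 ∂(Measure.map (fun ω => (X ω, Y ω)) μ) := by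
      rw [integral_map hmXY.aemeasurable (f := fun p : ℝ × ℝ => p.1 * p.2)
        (measurable_fst.mul measurable_snd).aestronglyMeasurable]
    have h2 : ∫ ω, X' ω * Y' ω ∂μ
        = ∫ p : ℝ × ℝ, p.1 * p.2 ∂(Measure.map (fun ω => (X' ω, Y' ω)) μ) := by
      rw [integral_map hmXY'.aemeasurable (f := fun p : ℝ × ℝ => p.1 * p.2)
        (measurable_fst.mul measurable_snd).aestronglyMeasurable]
    rw [h1, h2, hid]
  have hiX'Y' : Integrable (fun ω => X' ω * Y' ω) μ := by
    have : Integrable (fun p : ℝ × ℝ => p.1 * p.2) (Measure.map (fun ω => (X' ω, Y' ω)) μ) := by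
      rw [← hid]
      rwa [integrable_map_measure (g := fun p : ℝ × ℝ => p.1 * p.2) (measurable_fst.mul measurable_snd).aestronglyMeasurable
        hmXY.aemeasurable]
    rwa [integrable_map_measure (g := fun p : ℝ × ℝ => p.1 * p.2) (measurable_fst.mul measurable_snd).aestronglyMeasurable
      hmXY'.aemeasurable] at this
  have hiXY' : Integrable (X * Y') μ := hXY'.integrable_mul hiX hiY'
  have hiX'Y : Integrable (Y * X') μ := hX'Y.integrable_mul hiY hiX'
  -- the key expansion
  have key : ∫ ω, (X ω - X' ω) * (Y ω - Y' ω) ∂μ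
      = (∫ ω, (X ω - X' ω) ∂μ) * ∫ ω, (Y ω - Y' ω) ∂μ :=
    hindep_diff.integral_mul_eq_mul_integral ((hX.sub hX').aestronglyMeasurable)
      ((hY.sub hY').aestronglyMeasurable)
  have hrhs : (∫ ω, (X ω - X' ω) ∂μ) * ∫ ω, (Y ω - Y' ω) ∂μ = 0 := by
    rw [integral_sub hiX hiX', hEX]
    simp
  have hEXY'v : ∫ ω, X ω * Y' ω ∂μ = (∫ ω, X ω ∂μ) * ∫ ω, Y ω ∂μ := by
    have := hXY'.integral_mul_eq_mul_integral hiX.aestronglyMeasurable hiY'.aestronglyMeasurable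
    simpa [Pi.mul_apply, hEY] using this
  have hEX'Yv : ∫ ω, Y ω * X' ω ∂μ = (∫ ω, X ω ∂μ) * ∫ ω, Y ω ∂μ := by
    have := hX'Y.integral_mul_eq_mul_integral hiY.aestronglyMeasurable hiX'.aestronglyMeasurable
    show integral μ (Y * X') = _
    rw [this, hEX]; ring
  have expand : ∫ ω, (X ω - X' ω) * (Y ω - Y' ω) ∂μ
      = ∫ ω, X ω * Y ω ∂μ - ∫ ω, X ω * Y' ω ∂μ - ∫ ω, Y ω * X' ω ∂μ
        + ∫ ω, X' ω * Y' ω ∂μ := by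
    have h : (fun ω => (X ω - X' ω) * (Y ω - Y' ω))
        = fun ω => (X ω * Y ω - X ω * Y' ω) - (Y ω * X' ω - X' ω * Y' ω) := by
      funext ω; ring
    have i1 : Integrable (fun ω => X ω * Y' ω) μ := hiXY'
    have i2 : Integrable (fun ω => Y ω * X' ω) μ := hiX'Y
    have i3 : Integrable (fun ω => X ω * Y ω - X ω * Y' ω) μ := hiXY.sub i1
    have i4 : Integrable (fun ω => Y ω * X' ω - X' ω * Y' ω) μ := i2.sub hiX'Y'
    rw [h, integral_sub i3 i4, integral_sub hiXY i1, integral_sub i2 hiX'Y']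
    ring
  have := key.trans hrhs
  rw [expand, hEXY, hEXY'v, hEX'Yv] at this
  linarith
end

section
/- If a random vector (X,Y) satisfies E[X^k Y^ℓ] = E[X^k] E[Y^ℓ] for all nonnegative integers k, ℓ, and |X|, |Y| are a.s. bounded, then X and Y are independent. -/
open MeasureTheory ProbabilityTheory
open scoped NNReal ENNReal

theorem stmt_4 {Ω : Type*} [MeasurableSpace Ω] (μ : Measure Ω) [IsProbabilityMeasure μ]
    (X Y : Ω → ℝ) (hX : Measurable X) (hY : Measurable Y)
    (C : ℝ) (hbX : ∀ᵐ ω ∂μ, |X ω| ≤ C) (hbY : ∀ᵐ ω ∂μ, |Y ω| ≤ C)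
    (hmom : ∀ k ℓ : ℕ, ∫ ω, X ω ^ k * Y ω ^ ℓ ∂μ = (∫ ω, X ω ^ k ∂μ) * ∫ ω, Y ω ^ ℓ ∂μ) :
    IndepFun X Y μ := by
  rw [indepFun_iff_map_prod_eq_prod_map_map hX.aemeasurable hY.aemeasurable]
  set I : Set ℝ := Set.Icc (-C) C with hI
  set K : Set (ℝ × ℝ) := I ×ˢ I with hKdef
  have hKm : MeasurableSet K := measurableSet_Icc.prod measurableSet_Icc
  have hXY : Measurable fun ω => (X ω, Y ω) := hX.prodMk hY
  set ν₁ : Measure (ℝ × ℝ) := μ.map (fun ω => (X ω, Y ω)) with hν₁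
  set ν₂ : Measure (ℝ × ℝ) := (μ.map X).prod (μ.map Y) with hν₂
  haveI : IsProbabilityMeasure (μ.map X) := Measure.isProbabilityMeasure_map hX.aemeasurable
  haveI : IsProbabilityMeasure (μ.map Y) := Measure.isProbabilityMeasure_map hY.aemeasurable
  haveI : IsProbabilityMeasure ν₁ := Measure.isProbabilityMeasure_map hXY.aemeasurable
  haveI : IsProbabilityMeasure ν₂ := by rw [hν₂]; infer_instance
  have hmemX : ∀ᵐ ω ∂μ, X ω ∈ I := hbX.mono fun ω h => abs_le.mp h
  have hmemY : ∀ᵐ ω ∂μ, Y ω ∈ I := hbY.mono fun ω h => abs_le.mp h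
  -- both measures are supported on K
  have hae₁ : ∀ᵐ p ∂ν₁, p ∈ K := by
    rw [hν₁]
    refine (ae_map_iff hXY.aemeasurable hKm).mpr ?_
    filter_upwards [hmemX, hmemY] with ω h1 h2 using ⟨h1, h2⟩
  have hMXI : (μ.map X) Iᶜ = 0 :=
    ae_iff.mp ((ae_map_iff (p := fun x => x ∈ I) hX.aemeasurable measurableSet_Icc).mpr hmemX)
  have hMYI : (μ.map Y) Iᶜ = 0 :=
    ae_iff.mp ((ae_map_iff (p := fun x => x ∈ I) hY.aemeasurable measurableSet_Icc).mpr hmemY)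
  have hae₂ : ∀ᵐ p ∂ν₂, p ∈ K := by
    have hKone : ν₂ K = 1 := by
      rw [hν₂, hKdef, Measure.prod_prod,
        (prob_compl_eq_zero_iff measurableSet_Icc).mp hMXI,
        (prob_compl_eq_zero_iff measurableSet_Icc).mp hMYI, one_mul]
    have : ν₂ Kᶜ = 0 := (prob_compl_eq_zero_iff hKm).mpr hKone
    exact ae_iff.mpr this
  -- pass to the subtype K
  have he : MeasurableEmbedding ((↑) : K → ℝ × ℝ) := MeasurableEmbedding.subtype_coe hKm
  set ν₁' : Measure K := ν₁.comap (↑) with hν₁'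
  set ν₂' : Measure K := ν₂.comap (↑) with hν₂'
  have hmap₁ : ν₁'.map (↑) = ν₁ := by
    rw [hν₁', map_comap_subtype_coe hKm, Measure.restrict_eq_self_of_ae_mem hae₁]
  have hmap₂ : ν₂'.map (↑) = ν₂ := by
    rw [hν₂', map_comap_subtype_coe hKm, Measure.restrict_eq_self_of_ae_mem hae₂]
  haveI : IsFiniteMeasure ν₁' := by
    constructor
    rw [hν₁', comap_subtype_coe_apply hKm]
    exact lt_of_le_of_lt (measure_mono (Set.subset_univ _)) (measure_lt_top ν₁ _)
  haveI : IsFiniteMeasure ν₂' := by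
    constructor
    rw [hν₂', comap_subtype_coe_apply hKm]
    exact lt_of_le_of_lt (measure_mono (Set.subset_univ _)) (measure_lt_top ν₂ _)
  haveI : CompactSpace K := isCompact_iff_compactSpace.mp
    ((isCompact_Icc).prod isCompact_Icc)
  suffices hsub : ν₁' = ν₂' by
    rw [← hmap₁, ← hmap₂, hsub]
  -- key: integrals of all continuous functions on K agree
  suffices hint : ∀ g : C(K, ℝ), ∫ x, g x ∂ν₁' = ∫ x, g x ∂ν₂' by
    apply ext_of_forall_lintegral_eq_of_IsFiniteMeasure
    intro f
    have hfc : Continuous fun x : K => ((f x : ℝ≥0) : ℝ) :=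
      NNReal.continuous_coe.comp f.continuous
    have h1 : Integrable (fun x : K => ((f x : ℝ≥0) : ℝ)) ν₁' :=
      (BoundedContinuousFunction.mkOfCompact (ContinuousMap.mk _ hfc)).integrable ν₁'
    have h2 : Integrable (fun x : K => ((f x : ℝ≥0) : ℝ)) ν₂' :=
      (BoundedContinuousFunction.mkOfCompact (ContinuousMap.mk _ hfc)).integrable ν₂'
    rw [lintegral_coe_eq_integral _ h1, lintegral_coe_eq_integral _ h2]
    exact congrArg ENNReal.ofReal (hint (ContinuousMap.mk _ hfc))
  -- the coordinate functions
  set fstK : C(K, ℝ) := ⟨fun x => (x : ℝ × ℝ).1, continuous_fst.comp continuous_subtype_val⟩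
  set sndK : C(K, ℝ) := ⟨fun x => (x : ℝ × ℝ).2, continuous_snd.comp continuous_subtype_val⟩
  set A : Subalgebra ℝ C(K, ℝ) := Algebra.adjoin ℝ {fstK, sndK} with hA
  -- monomials satisfy the equality
  have hInt : ∀ (ν : Measure K) [IsFiniteMeasure ν] (g : C(K, ℝ)),
      Integrable (fun x => g x) ν := fun ν _ g =>
    (BoundedContinuousFunction.mkOfCompact g).integrable ν
  have hmono : ∀ k ℓ : ℕ, ∫ x, (fstK ^ k * sndK ^ ℓ) x ∂ν₁'
      = ∫ x, (fstK ^ k * sndK ^ ℓ) x ∂ν₂' := by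
    intro k ℓ
    have hFm : AEStronglyMeasurable (fun p : ℝ × ℝ => p.1 ^ k * p.2 ^ ℓ) (ν₁'.map (↑)) :=
      (Continuous.aestronglyMeasurable (by fun_prop))
    have hFm2 : AEStronglyMeasurable (fun p : ℝ × ℝ => p.1 ^ k * p.2 ^ ℓ) (ν₂'.map (↑)) :=
      (Continuous.aestronglyMeasurable (by fun_prop))
    have e1 : ∫ x, (fstK ^ k * sndK ^ ℓ) x ∂ν₁'
        = ∫ p : ℝ × ℝ, p.1 ^ k * p.2 ^ ℓ ∂ν₁ := by
      rw [← hmap₁, he.integral_map]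
      rfl
    have e2 : ∫ x, (fstK ^ k * sndK ^ ℓ) x ∂ν₂'
        = ∫ p : ℝ × ℝ, p.1 ^ k * p.2 ^ ℓ ∂ν₂ := by
      rw [← hmap₂, he.integral_map]
      rfl
    rw [e1, e2]
    have r1 : ∫ p : ℝ × ℝ, p.1 ^ k * p.2 ^ ℓ ∂ν₁ = ∫ ω, X ω ^ k * Y ω ^ ℓ ∂μ := by
      rw [hν₁, integral_map hXY.aemeasurable (Continuous.aestronglyMeasurable (by fun_prop))]
    have r2 : ∫ p : ℝ × ℝ, p.1 ^ k * p.2 ^ ℓ ∂ν₂ = (∫ ω, X ω ^ k ∂μ) * ∫ ω, Y ω ^ ℓ ∂μ := by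
      rw [hν₂, integral_prod_mul (fun x : ℝ => x ^ k) (fun y : ℝ => y ^ ℓ),
        integral_map hX.aemeasurable (Continuous.aestronglyMeasurable (by fun_prop)),
        integral_map hY.aemeasurable (Continuous.aestronglyMeasurable (by fun_prop))]
    rw [r1, r2, hmom k ℓ]
  -- the set of functions where the two integrals agree is closed and contains A
  have hclosed : IsClosed {g : C(K, ℝ) | ∫ x, g x ∂ν₁' = ∫ x, g x ∂ν₂'} := by
    have hc : ∀ (ν : Measure K) [IsFiniteMeasure ν],
        Continuous fun g : C(K, ℝ) => ∫ x, g x ∂ν := by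
      intro ν _
      have : LipschitzWith (ν Set.univ).toNNReal (fun g : C(K, ℝ) => ∫ x, g x ∂ν) := by
        apply LipschitzWith.of_dist_le_mul
        intro g h
        rw [dist_eq_norm, dist_eq_norm, ← integral_sub (hInt ν g) (hInt ν h)]
        have : ∀ x, ‖g x - h x‖ ≤ ‖g - h‖ := fun x => by
          calc ‖g x - h x‖ = ‖(g - h) x‖ := by simp
            _ ≤ ‖g - h‖ := ContinuousMap.norm_coe_le_norm _ x
        calc ‖∫ x, (g x - h x) ∂ν‖ ≤ ‖g - h‖ * (ν Set.univ).toReal :=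
              norm_integral_le_of_norm_le_const (Filter.Eventually.of_forall this)
          _ = (ν Set.univ).toNNReal * ‖g - h‖ := by
              rw [mul_comm]; rfl
      exact this.continuous
    exact isClosed_eq (hc ν₁') (hc ν₂')
  have hAsub : (A : Set C(K, ℝ)) ⊆ {g : C(K, ℝ) | ∫ x, g x ∂ν₁' = ∫ x, g x ∂ν₂'} := by
    intro g hg
    have hg' : g ∈ Submodule.span ℝ (Submonoid.closure ({fstK, sndK} : Set C(K, ℝ)) : Set C(K, ℝ)) := by
      rw [← Algebra.adjoin_eq_span]; exact hg
    refine Submodule.span_induction ?_ ?_ ?_ ?_ hg'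
    · intro h hh
      obtain ⟨k, ℓ, rfl⟩ := (Submonoid.mem_closure_pair fstK sndK h).mp hh
      exact hmono k ℓ
    · simp
    · intro a b _ _ ha hb
      simp only [Set.mem_setOf_eq] at *
      rw [ContinuousMap.coe_add]
      simp only [Pi.add_apply]
      rw [integral_add (hInt ν₁' a) (hInt ν₁' b), integral_add (hInt ν₂' a) (hInt ν₂' b),
        ha, hb]
    · intro c a _ ha
      simp only [Set.mem_setOf_eq] at *
      rw [ContinuousMap.coe_smul]
      simp only [Pi.smul_apply, smul_eq_mul, integral_const_mul, ha]
  -- A separates points, so its closure is everything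
  have hsep : A.SeparatesPoints := by
    intro p q hpq
    have hne : (p : ℝ × ℝ) ≠ (q : ℝ × ℝ) := fun h => hpq (Subtype.ext h)
    by_cases h1 : (p : ℝ × ℝ).1 = (q : ℝ × ℝ).1
    · have h2 : (p : ℝ × ℝ).2 ≠ (q : ℝ × ℝ).2 :=
        fun h2 => hne (Prod.ext_iff.mpr ⟨h1, h2⟩)
      exact ⟨sndK, ⟨sndK, Algebra.subset_adjoin (Set.mem_insert_of_mem _ rfl), rfl⟩, h2⟩
    · exact ⟨fstK, ⟨fstK, Algebra.subset_adjoin (Set.mem_insert _ _), rfl⟩, h1⟩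
  have htop : A.topologicalClosure = ⊤ :=
    ContinuousMap.subalgebra_topologicalClosure_eq_top_of_separatesPoints A hsep
  intro g
  have hgmem : g ∈ A.topologicalClosure := htop ▸ Algebra.mem_top
  have : g ∈ closure (A : Set C(K, ℝ)) := hgmem
  exact hclosed.closure_subset_iff.mpr hAsub this
end

section
/- The Laplace density f(u) = (1/2)e^{-|u|} does not satisfy the functional equation: there is no constant A > 0, even function g, and density h of X-Y (X,Y i.i.d. with density f) such that f((u+v)/2)f((u-v)/2) = 2A f(Au + g(v)) h(v) for all u, v. In particular, for fixed v > 0 the left-hand side (1/4)exp(-|(u+v)/2| - |(u-v)/2|) is constant in u on (-v, v) while u ↦ 2A f(Au + g(v)) h(v) is not constant on any nondegenerate interval unless it is zero. -/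
open MeasureTheory

theorem stmt_11 (f : ℝ → ℝ) (hf : ∀ u, f u = (1 / 2) * Real.exp (-|u|)) :
    ¬ ∃ (A : ℝ) (_ : 0 < A) (g h : ℝ → ℝ),
        (∀ v, g (-v) = g v) ∧
        (∀ v, h v = ∫ x, f x * f (x - v)) ∧
        ∀ u v : ℝ, f ((u + v) / 2) * f ((u - v) / 2) = 2 * A * f (A * u + g v) * h v := by
  rintro ⟨A, hA, g, h, -, -, heq⟩
  have e0 := heq 0 2
  have e1 := heq 1 2
  have e2 := heq (-1) 2
  simp only [hf] at e0 e1 e2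
  rw [show ((0:ℝ) + 2) / 2 = 1 by norm_num, show ((0:ℝ) - 2) / 2 = -1 by norm_num,
      show A * 0 + g 2 = g 2 by ring] at e0
  rw [show ((1:ℝ) + 2) / 2 = 3/2 by norm_num, show ((1:ℝ) - 2) / 2 = -(1/2) by norm_num,
      show A * 1 + g 2 = A + g 2 by ring] at e1
  rw [show ((-1:ℝ) + 2) / 2 = 1/2 by norm_num, show ((-1:ℝ) - 2) / 2 = -(3/2) by norm_num,
      show A * (-1) + g 2 = g 2 - A by ring] at e2
  rw [abs_one, abs_neg, abs_one] at e0
  rw [abs_neg] at e1 e2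
  rw [show |(3/2 : ℝ)| = 3/2 by norm_num, show |(1/2 : ℝ)| = 1/2 by norm_num] at e1 e2
  -- both sides' exponentials combine
  have lhs0 : (1/2 : ℝ) * Real.exp (-1) * ((1/2) * Real.exp (-1)) = (1/4) * Real.exp (-2) := by
    rw [show (1/2 : ℝ) * Real.exp (-1) * ((1/2) * Real.exp (-1))
        = (1/4) * (Real.exp (-1) * Real.exp (-1)) by ring, ← Real.exp_add]
    norm_num
  have lhs1 : (1/2 : ℝ) * Real.exp (-(3/2)) * ((1/2) * Real.exp (-(1/2))) = (1/4) * Real.exp (-2) := by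
    rw [show (1/2 : ℝ) * Real.exp (-(3/2)) * ((1/2) * Real.exp (-(1/2)))
        = (1/4) * (Real.exp (-(3/2)) * Real.exp (-(1/2))) by ring, ← Real.exp_add]
    norm_num
  have lhs2 : (1/2 : ℝ) * Real.exp (-(1/2)) * ((1/2) * Real.exp (-(3/2))) = (1/4) * Real.exp (-2) := by
    rw [show (1/2 : ℝ) * Real.exp (-(1/2)) * ((1/2) * Real.exp (-(3/2)))
        = (1/4) * (Real.exp (-(1/2)) * Real.exp (-(3/2))) by ring, ← Real.exp_add]
    norm_num
  rw [lhs0] at e0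
  rw [lhs1] at e1
  rw [lhs2] at e2
  -- h 2 is positive
  have hexp2 := Real.exp_pos (-2 : ℝ)
  have hexpG := Real.exp_pos (-|g 2|)
  have hexpA := Real.exp_pos (-|A + g 2|)
  have hexpB := Real.exp_pos (-|g 2 - A|)
  have hH : 0 < h 2 := by
    by_contra hc
    push_neg at hc
    have hle : 2 * A * (1 / 2 * Real.exp (-|g 2|)) * h 2 ≤ 0 :=
      mul_nonpos_of_nonneg_of_nonpos (by positivity) hc
    linarith
  have hne : A * h 2 ≠ 0 := by positivity
  -- equate the right-hand sides
  have key1 : Real.exp (-|g 2|) = Real.exp (-|A + g 2|) := by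
    refine mul_right_cancel₀ hne ?_
    linear_combination e0.symm.trans e1
  have key2 : Real.exp (-|g 2|) = Real.exp (-|g 2 - A|) := by
    refine mul_right_cancel₀ hne ?_
    linear_combination e0.symm.trans e2
  have a1 : |g 2| = |A + g 2| := by
    have := congrArg Real.log key1
    rwa [Real.log_exp, Real.log_exp, neg_inj] at this
  have a2 : |g 2| = |g 2 - A| := by
    have := congrArg Real.log key2
    rwa [Real.log_exp, Real.log_exp, neg_inj] at this
  have s1 : (g 2)^2 = (A + g 2)^2 := by
    rw [← sq_abs (g 2), ← sq_abs (A + g 2), a1]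
  have s2 : (g 2)^2 = (g 2 - A)^2 := by
    rw [← sq_abs (g 2), ← sq_abs (g 2 - A), a2]
  nlinarith
end

section
/- In the Hungarian roulette with n players, ξₙ the number of first-round survivors satisfies P(ξₙ = k) = Σ_{ℓ=k}^{n-2} (-1)^{ℓ-k} C(ℓ,k) C(n,ℓ) (n-ℓ)^ℓ (n-ℓ-1)^{n-ℓ} / (n-1)^n for 0 ≤ k ≤ n-2 and n ≥ 3. -/
open MeasureTheory Finset

/-- Configurations of the Hungarian roulette: each of the `n` players shoots someone else. -/
def Shots (n : ℕ) := {f : Fin n → Fin n // ∀ i, f i ≠ i}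

instance (n : ℕ) : Fintype (Shots n) := Subtype.fintype _

instance (n : ℕ) : MeasurableSpace (Shots n) := ⊤

/-- Number of survivors of the first round: players shot by nobody. -/
def xi {n : ℕ} (f : Shots n) : ℕ :=
  (Finset.univ.filter fun i : Fin n => ∀ j, f.val j ≠ i).card

lemma card_shots (n : ℕ) : Fintype.card (Shots n) = (n - 1) ^ n := by
  have e : Shots n ≃ ∀ i : Fin n, {j : Fin n // j ≠ i} :=
    (Equiv.subtypePiEquivPi (p := fun (i : Fin n) (j : Fin n) => j ≠ i))
  rw [Fintype.card_congr e, Fintype.card_pi]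
  have h : ∀ i : Fin n, Fintype.card {j : Fin n // j ≠ i} = n - 1 := by
    intro i
    rw [Fintype.card_subtype_compl, Fintype.card_subtype_eq, Fintype.card_fin]
  simp [h]

lemma count_avoid (n : ℕ) (S : Finset (Fin n)) :
    (univ.filter fun f : Shots n => ∀ j, f.val j ∉ S).card
      = (n - S.card) ^ S.card * (n - S.card - 1) ^ (n - S.card) := by
  rw [← Fintype.card_subtype]
  have e : {f : Shots n // ∀ j, f.val j ∉ S} ≃ ∀ j : Fin n, {x : Fin n // x ≠ j ∧ x ∉ S} :=
    { toFun := fun f j => ⟨f.1.1 j, f.1.2 j, f.2 j⟩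
      invFun := fun g => ⟨⟨fun j => (g j).1, fun j => (g j).2.1⟩, fun j => (g j).2.2⟩
      left_inv := fun f => rfl
      right_inv := fun g => rfl }
  rw [Fintype.card_congr e, Fintype.card_pi]
  have hcard : ∀ j : Fin n, Fintype.card {x : Fin n // x ≠ j ∧ x ∉ S}
      = if j ∈ S then n - S.card else n - S.card - 1 := by
    intro j
    rw [Fintype.card_subtype]
    have hfe : (univ.filter fun x : Fin n => x ≠ j ∧ x ∉ S) = (insert j S)ᶜ := by
      ext x
      simp [not_or]
    rw [hfe, card_compl, Fintype.card_fin]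
    by_cases hj : j ∈ S
    · rw [insert_eq_self.2 hj, if_pos hj]
    · rw [card_insert_of_notMem hj, if_neg hj, Nat.sub_sub]
  simp only [hcard]
  rw [← Finset.prod_mul_prod_compl S]
  rw [Finset.prod_congr rfl (fun j hj => if_pos hj),
    Finset.prod_congr rfl (fun j hj => if_neg (Finset.mem_compl.1 hj)),
    Finset.prod_const, Finset.prod_const, Finset.card_compl, Fintype.card_fin]

lemma sum_choose_xi (n ℓ : ℕ) :
    ∑ f : Shots n, (xi f).choose ℓ
      = n.choose ℓ * ((n - ℓ) ^ ℓ * (n - ℓ - 1) ^ (n - ℓ)) := by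
  have key : ∀ f : Shots n, (xi f).choose ℓ
      = ((univ.powersetCard ℓ).filter fun S => ∀ j, f.val j ∉ S).card := by
    intro f
    rw [xi, ← Finset.card_powersetCard]
    congr 1
    ext S
    simp only [Finset.mem_powersetCard, Finset.mem_filter, Finset.subset_iff,
      Finset.mem_filter, Finset.mem_univ, true_and, Finset.subset_univ, implies_true]
    constructor
    · rintro ⟨hsub, hcard⟩
      exact ⟨hcard, fun j hj => (hsub hj j rfl).elim⟩
    · rintro ⟨hcard, havoid⟩
      exact ⟨fun i hi j hji => havoid j (hji ▸ hi), hcard⟩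
  calc ∑ f : Shots n, (xi f).choose ℓ
      = ∑ f : Shots n, ∑ S ∈ univ.powersetCard ℓ, if ∀ j, f.val j ∉ S then 1 else 0 := by
        refine Finset.sum_congr rfl fun f _ => ?_
        rw [key f, Finset.card_filter]
    _ = ∑ S ∈ univ.powersetCard ℓ, ∑ f : Shots n, if ∀ j, f.val j ∉ S then 1 else 0 :=
        Finset.sum_comm
    _ = ∑ S ∈ univ.powersetCard ℓ, (univ.filter fun f : Shots n => ∀ j, f.val j ∉ S).card := by
        refine Finset.sum_congr rfl fun S _ => ?_
        rw [Finset.card_filter]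
    _ = ∑ S ∈ univ.powersetCard ℓ, (n - ℓ) ^ ℓ * (n - ℓ - 1) ^ (n - ℓ) := by
        refine Finset.sum_congr rfl fun S hS => ?_
        have hc : S.card = ℓ := (Finset.mem_powersetCard.1 hS).2
        rw [count_avoid, hc]
    _ = n.choose ℓ * ((n - ℓ) ^ ℓ * (n - ℓ - 1) ^ (n - ℓ)) := by
        rw [Finset.sum_const, Finset.card_powersetCard, Finset.card_univ, Fintype.card_fin,
          smul_eq_mul]

lemma xi_le (n : ℕ) (hn : 3 ≤ n) (f : Shots n) : xi f ≤ n - 2 := by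
  have h0 : (0 : ℕ) < n := by omega
  set i0 : Fin n := ⟨0, h0⟩
  set a := f.1 i0 with ha
  set b := f.1 a with hb
  have hab : b ≠ a := f.2 a
  have hsub : (univ.filter fun i : Fin n => ∀ j, f.val j ≠ i) ⊆ ({a, b} : Finset (Fin n))ᶜ := by
    intro i hi
    rw [Finset.mem_filter] at hi
    rw [Finset.mem_compl, Finset.mem_insert, Finset.mem_singleton]
    rintro (rfl | rfl)
    · exact hi.2 i0 rfl
    · exact hi.2 a rfl
  calc xi f ≤ (({a, b} : Finset (Fin n))ᶜ).card := Finset.card_le_card hsub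
    _ = n - 2 := by
        rw [Finset.card_compl, Fintype.card_fin,
          Finset.card_insert_of_notMem (by simpa using hab.symm), Finset.card_singleton]

lemma alt_sum (N k m : ℕ) (hm : m ≤ N) :
    ∑ ℓ ∈ Icc k N, (-1 : ℝ) ^ (ℓ - k) * (ℓ.choose k) * (m.choose ℓ)
      = if m = k then 1 else 0 := by
  by_cases hmk : k ≤ m
  · have hsub : Icc k m ⊆ Icc k N := Finset.Icc_subset_Icc_right hm
    rw [← Finset.sum_subset hsub (fun ℓ hℓ hℓ' => by
      have : m < ℓ := by
        simp only [Finset.mem_Icc] at hℓ hℓ'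
        omega
      rw [Nat.choose_eq_zero_of_lt this, Nat.cast_zero, mul_zero])]
    have hterm : ∀ ℓ ∈ Icc k m, (-1 : ℝ) ^ (ℓ - k) * (ℓ.choose k) * (m.choose ℓ)
        = (m.choose k : ℝ) * ((-1 : ℝ) ^ (ℓ - k) * ((m - k).choose (ℓ - k))) := by
      intro ℓ hℓ
      rw [Finset.mem_Icc] at hℓ
      have h := Nat.choose_mul (n := m) hℓ.1
      have h' : ((m.choose ℓ : ℝ) * (ℓ.choose k : ℝ)) = (m.choose k : ℝ) * ((m - k).choose (ℓ - k) : ℝ) := by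
        exact_mod_cast congrArg (Nat.cast : ℕ → ℝ) h
      linear_combination ((-1:ℝ) ^ (ℓ - k)) * h'
    rw [Finset.sum_congr rfl hterm, ← Finset.mul_sum]
    rw [← Finset.Ico_add_one_right_eq_Icc, Finset.sum_Ico_eq_sum_range]
    have hr : ∀ j, (k + j) - k = j := fun j => by omega
    simp only [hr]
    have hrange : m + 1 - k = (m - k) + 1 := by omega
    rw [hrange]
    have halt : (∑ j ∈ range ((m - k) + 1), (-1 : ℝ) ^ j * ((m - k).choose j))
        = if m - k = 0 then 1 else 0 := by
      have h := Int.alternating_sum_range_choose (n := m - k)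
      have h2 := congrArg (fun z : ℤ => (z : ℝ)) h
      simp only [Int.cast_sum, Int.cast_mul, Int.cast_pow, Int.cast_neg, Int.cast_one,
        Int.cast_natCast, apply_ite (fun z : ℤ => (z : ℝ)), Int.cast_zero] at h2
      exact h2
    rw [halt]
    by_cases h0 : m = k
    · subst h0
      simp
    · rw [if_neg (by omega), if_neg h0, mul_zero]
  · have : ∀ ℓ ∈ Icc k N, (-1 : ℝ) ^ (ℓ - k) * (ℓ.choose k) * (m.choose ℓ) = 0 := by
      intro ℓ hℓ
      rw [Finset.mem_Icc] at hℓ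
      rw [Nat.choose_eq_zero_of_lt (show m < ℓ by omega), Nat.cast_zero, mul_zero]
    rw [Finset.sum_congr rfl this, Finset.sum_const, smul_zero, if_neg (by omega)]

lemma sum_choose_xi_fiber (n ℓ : ℕ) (hn : 3 ≤ n) :
    ∑ m ∈ Icc 0 (n - 2), ((univ.filter fun f : Shots n => xi f = m).card) * m.choose ℓ
      = n.choose ℓ * ((n - ℓ) ^ ℓ * (n - ℓ - 1) ^ (n - ℓ)) := by
  rw [← sum_choose_xi n ℓ]
  rw [← Finset.sum_fiberwise_of_maps_to (g := xi)
    (fun f _ => Finset.mem_Icc.2 ⟨Nat.zero_le _, xi_le n hn f⟩) (fun f => (xi f).choose ℓ)]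
  refine Finset.sum_congr rfl fun m _ => ?_
  rw [Finset.sum_congr rfl (fun f hf => by rw [(Finset.mem_filter.1 hf).2]),
    Finset.sum_const, smul_eq_mul]

lemma main_real (n k : ℕ) (hn : 3 ≤ n) (hk : k ≤ n - 2) :
    (((univ.filter fun f : Shots n => xi f = k).card : ℝ))
      = ∑ ℓ ∈ Icc k (n - 2), (-1 : ℝ) ^ (ℓ - k) * (ℓ.choose k) *
          ((n.choose ℓ) * (((n - ℓ : ℕ) : ℝ)) ^ ℓ * (((n - ℓ - 1 : ℕ) : ℝ)) ^ (n - ℓ)) := by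
  have hN : ∀ ℓ, ((n.choose ℓ : ℝ) * (((n - ℓ : ℕ) : ℝ)) ^ ℓ * (((n - ℓ - 1 : ℕ) : ℝ)) ^ (n - ℓ))
      = ∑ m ∈ Icc 0 (n - 2), ((univ.filter fun f : Shots n => xi f = m).card : ℝ) * m.choose ℓ := by
    intro ℓ
    have := sum_choose_xi_fiber n ℓ hn
    have h2 := congrArg (fun z : ℕ => (z : ℝ)) this
    push_cast at h2
    rw [h2]
    ring
  calc (((univ.filter fun f : Shots n => xi f = k).card : ℝ))
      = ∑ m ∈ Icc 0 (n - 2), ((univ.filter fun f : Shots n => xi f = m).card : ℝ) *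
          (if m = k then 1 else 0) := by
        rw [Finset.sum_congr rfl (fun m _ => by rw [mul_ite, mul_one, mul_zero]),
          Finset.sum_ite_eq' (Icc 0 (n - 2)) k
            (fun m => ((univ.filter fun f : Shots n => xi f = m).card : ℝ)),
          if_pos (Finset.mem_Icc.2 ⟨Nat.zero_le _, hk⟩)]
    _ = ∑ m ∈ Icc 0 (n - 2), ((univ.filter fun f : Shots n => xi f = m).card : ℝ) *
          (∑ ℓ ∈ Icc k (n - 2), (-1 : ℝ) ^ (ℓ - k) * (ℓ.choose k) * (m.choose ℓ)) := by
        refine Finset.sum_congr rfl fun m hm => ?_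
        rw [alt_sum (n - 2) k m (Finset.mem_Icc.1 hm).2]
    _ = ∑ ℓ ∈ Icc k (n - 2), (-1 : ℝ) ^ (ℓ - k) * (ℓ.choose k) *
          ((n.choose ℓ) * (((n - ℓ : ℕ) : ℝ)) ^ ℓ * (((n - ℓ - 1 : ℕ) : ℝ)) ^ (n - ℓ)) := by
        simp only [Finset.mul_sum]
        rw [Finset.sum_comm]
        refine Finset.sum_congr rfl fun ℓ _ => ?_
        rw [hN ℓ, Finset.mul_sum]
        refine Finset.sum_congr rfl fun m _ => ?_
        ring

theorem stmt_16 (n k : ℕ) (hn : 3 ≤ n) (hk : k ≤ n - 2) [Nonempty (Shots n)] :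
    (PMF.uniformOfFintype (Shots n)).toMeasure {f : Shots n | xi f = k} =
      ENNReal.ofReal
        (∑ ℓ ∈ Finset.Icc k (n - 2),
          (-1 : ℝ) ^ (ℓ - k) * (ℓ.choose k) * (n.choose ℓ) *
            ((n : ℝ) - ℓ) ^ ℓ * ((n : ℝ) - ℓ - 1) ^ (n - ℓ) / ((n : ℝ) - 1) ^ n) := by
  have hB : (0 : ℝ) < (((n - 1) ^ n : ℕ) : ℝ) := by
    have : 0 < (n - 1) ^ n := Nat.pow_pos (by omega)
    exact_mod_cast this
  have hmeas : (PMF.uniformOfFintype (Shots n)).toMeasure {f : Shots n | xi f = k}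
      = (((univ.filter fun f : Shots n => xi f = k).card : ℕ) : ENNReal)
          / (((n - 1) ^ n : ℕ) : ENNReal) := by
    rw [PMF.toMeasure_uniformOfFintype_apply _ MeasurableSpace.measurableSet_top, card_shots]
    congr 2
    rw [Fintype.card_subtype]
    simp only [Set.mem_setOf_eq]
  have hsum : (∑ ℓ ∈ Finset.Icc k (n - 2),
          (-1 : ℝ) ^ (ℓ - k) * (ℓ.choose k) * (n.choose ℓ) *
            ((n : ℝ) - ℓ) ^ ℓ * ((n : ℝ) - ℓ - 1) ^ (n - ℓ) / ((n : ℝ) - 1) ^ n)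
      = (((univ.filter fun f : Shots n => xi f = k).card : ℕ) : ℝ)
          / (((n - 1) ^ n : ℕ) : ℝ) := by
    have hterm : ∀ ℓ ∈ Finset.Icc k (n - 2),
        (-1 : ℝ) ^ (ℓ - k) * (ℓ.choose k) * (n.choose ℓ) *
            ((n : ℝ) - ℓ) ^ ℓ * ((n : ℝ) - ℓ - 1) ^ (n - ℓ) / ((n : ℝ) - 1) ^ n
        = ((-1 : ℝ) ^ (ℓ - k) * (ℓ.choose k) *
            ((n.choose ℓ) * (((n - ℓ : ℕ) : ℝ)) ^ ℓ * (((n - ℓ - 1 : ℕ) : ℝ)) ^ (n - ℓ)))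
            / (((n - 1) ^ n : ℕ) : ℝ) := by
      intro ℓ hℓ
      have h1 : ℓ ≤ n := by have := (Finset.mem_Icc.1 hℓ).2; omega
      have h2 : 1 ≤ n - ℓ := by have := (Finset.mem_Icc.1 hℓ).2; omega
      have h3 : 1 ≤ n := by omega
      push_cast [Nat.cast_sub h1, Nat.cast_sub h2, Nat.cast_sub h3]
      ring
    rw [Finset.sum_congr rfl hterm, ← Finset.sum_div, ← main_real n k hn hk]
  rw [hmeas, hsum, ENNReal.ofReal_div_of_pos hB, ENNReal.ofReal_natCast,
    ENNReal.ofReal_natCast]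
end
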